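/- Let T be a string of length n, i a position, and u·uᴿ the maximal even palindrome centered at i with radius r = |u|. If w·g·u₁·u₁ᴿ·wᴿ is any SAGP occurring in T with pivot i such that the palindrome part u₁·u₁ᴿ is a suffix-restricted part of the maximal palindrome (i.e., |u₁| ≤ r) and the character immediately following position i + r does not extend the palindrome, then the occurrence of this SAGP ends at a position between i + 2 and i + r. In other words, every SAGP for pivot i at a type-2 position ends at one of the positions i+2, ..., i + Pals[i]. -/

import Mathlib

/-- 1-based substring T[b..e]. -/
def sub (T : List Char) (b e : ℕ) : List Char := (T.drop (b-1)).take (e+1-b)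

/-- The string x occurs in T beginning at 1-based position p. -/
def occursAt (T x : List Char) (p : ℕ) : Prop := x <+: T.drop (p-1)

/-- T has an even palindrome of radius r centered at position i (i.e. T[i-r+1..i+r] is a palindrome). -/
def evenPalAt (T : List Char) (i r : ℕ) : Prop :=
  r ≤ i ∧ i + r ≤ T.length ∧ (sub T (i-r+1) (i+r)).reverse = sub T (i-r+1) (i+r)

/-- The SAGP w·g·u·uᴿ·wᴿ (w, g, u nonempty) occurs in T with pivot i. -/
def SAGPat (T : List Char) (i : ℕ) (w g u : List Char) : Prop :=
  w ≠ [] ∧ g ≠ [] ∧ u ≠ [] ∧ ∃ b, 1 ≤ b ∧ b + (w.length + g.length + u.length) = i + 1 ∧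
    occursAt T (w ++ g ++ u ++ u.reverse ++ w.reverse) b

/-- w·g·u·uᴿ·wᴿ is a longest SAGP for pivot i (maximal arm length |wu|). -/
def longestSAGP (T : List Char) (i : ℕ) (w g u : List Char) : Prop :=
  SAGPat T i w g u ∧ ∀ w' g' u', SAGPat T i w' g' u' → w'.length + u'.length ≤ w.length + u.length

/-- w·g·u·uᴿ·wᴿ is a canonical longest SAGP for pivot i (moreover |u| maximal among longest). -/
def canonSAGP (T : List Char) (i : ℕ) (w g u : List Char) : Prop :=
  longestSAGP T i w g u ∧ ∀ w' g' u', longestSAGP T i w' g' u' → u'.length ≤ u.length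

/-- Position i is of type-1: some SAGP for pivot i has u·uᴿ equal to the maximal even palindrome centered at i. -/
def type1 (T : List Char) (i : ℕ) : Prop :=
  ∃ w g u, SAGPat T i w g u ∧ ∀ r, evenPalAt T i r → r ≤ u.length

/-!
If an SAGP `w·g·u·uᴿ·wᴿ` with pivot `i` had its arms reach past `i + r`, i.e. `r < |w| + |u|`,
then, since `|u| < r` at a type-2 position, the whole maximal palindrome `A·Aᴿ` lies inside the
occurrence. Keeping the start of the occurrence, the first `|w| + |u| - r` letters of `w`, a gap of
length `|g|`, and `A·Aᴿ` in the middle form an SAGP with pivot `i` whose palindromic part is the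
maximal palindrome, so `i` would be of type 1.
-/

theorem List.append_prefix_iff {α : Type*} {a b c : List α} :
    a ++ b <+: c ↔ a <+: c ∧ b <+: c.drop a.length := by
  refine ⟨fun h => ⟨(List.prefix_append a b).trans h, by simpa using h.drop a.length⟩, ?_⟩
  rintro ⟨⟨t, rfl⟩, hb⟩
  rw [List.drop_left] at hb
  exact (List.prefix_append_right_inj a).2 hb

theorem List.eq_take_append_reverse_take_of_reverse_eq {α : Type*} {L : List α} {r : ℕ}
    (hL : L.reverse = L) (hlen : L.length = 2 * r) :
    L = L.take r ++ (L.take r).reverse := by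
  have hsplit := List.take_append_drop r L
  have h : (L.drop r).reverse ++ (L.take r).reverse = L.take r ++ L.drop r := by
    rw [← List.reverse_append, hsplit, hL]
  have hlen' : (L.drop r).reverse.length = (L.take r).length := by
    simp only [List.length_reverse, List.length_drop, List.length_take]; omega
  conv_lhs => rw [← hsplit, ← (List.append_inj h hlen').2]

section occursAt

variable {T x y : List Char} {p q : ℕ}

theorem occursAt_append (hp : 1 ≤ p) :
    occursAt T (x ++ y) p ↔ occursAt T x p ∧ occursAt T y (p + x.length) := by
  unfold occursAt
  rw [show p + x.length - 1 = p - 1 + x.length by omega, ← List.drop_drop]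
  exact List.append_prefix_iff

theorem occursAt.append (hx : occursAt T x p) (hy : occursAt T y q) (hq : q = p + x.length)
    (hp : 1 ≤ p) : occursAt T (x ++ y) p :=
  (occursAt_append hp).2 ⟨hx, hq ▸ hy⟩

theorem occursAt.take (h : occursAt T x p) (n : ℕ) : occursAt T (x.take n) p :=
  (List.take_prefix n x).trans h

theorem occursAt.drop (h : occursAt T x p) (hp : 1 ≤ p) (n : ℕ) :
    occursAt T (x.drop n) (p + n) := by
  unfold occursAt at h ⊢
  rw [show p + n - 1 = p - 1 + n by omega, ← List.drop_drop]
  exact h.drop n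

end occursAt

theorem evenPalAt.exists_occursAt {T : List Char} {i r : ℕ} (h : evenPalAt T i r) :
    ∃ A : List Char, A.length = r ∧ occursAt T (A ++ A.reverse) (i - r + 1) := by
  obtain ⟨hri, hrT, hpal⟩ := h
  set L := sub T (i - r + 1) (i + r)
  have hlen : L.length = 2 * r := by simp only [L, sub, List.length_take, List.length_drop]; omega
  refine ⟨L.take r, by simp only [List.length_take, hlen, inf_eq_left]; omega, ?_⟩
  rw [← List.eq_take_append_reverse_take_of_reverse_eq hpal hlen]
  exact List.take_prefix _ _

theorem SAGPat.exists_of_evenPalAt {T : List Char} {i r : ℕ} {w g u : List Char}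
    (hs : SAGPat T i w g u) (hpal : evenPalAt T i r) (hur : u.length ≤ r)
    (hrw : r < w.length + u.length) :
    ∃ w' g' u', SAGPat T i w' g' u' ∧ u'.length = r := by
  obtain ⟨-, hg, hu, b, hb, hbi, hocc⟩ := hs
  have hk := List.length_pos_iff.mpr hg
  have hp := List.length_pos_iff.mpr hu
  obtain ⟨A, hA, hAocc⟩ := hpal.exists_occursAt
  set ℓ := w.length + u.length - r
  set g' := ((w ++ g ++ u).drop ℓ).take g.length
  have hg' : g'.length = g.length := by
    simp only [g', List.length_take, List.length_drop, List.length_append, inf_eq_left]; omega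
  have hℓ : (w.take ℓ).length = ℓ := by simp only [List.length_take, inf_eq_left]; omega
  obtain ⟨hocc', hright⟩ := (occursAt_append hb).1 hocc
  have hleft : occursAt T (w ++ g ++ u) b := ((occursAt_append hb).1 hocc').1
  have hw : occursAt T w b := ((occursAt_append hb).1 ((occursAt_append hb).1 hleft).1).1
  have hg'occ : occursAt T g' (b + ℓ) := (hleft.drop hb ℓ).take g.length
  replace hright : occursAt T (w.take ℓ).reverse (i + 1 + r) := by
    rw [List.reverse_take]
    convert hright.drop (by omega) (w.length - ℓ) using 1
    simp only [List.append_assoc, List.length_append, List.length_reverse]; omega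
  refine ⟨w.take ℓ, g', A, ⟨?_, ?_, ?_, b, hb, ?_, ?_⟩, hA⟩
  · exact List.ne_nil_of_length_pos (by omega)
  · exact List.ne_nil_of_length_pos (by omega)
  · exact List.ne_nil_of_length_pos (by omega)
  · omega
  · rw [show w.take ℓ ++ g' ++ A ++ A.reverse ++ (w.take ℓ).reverse
        = w.take ℓ ++ g' ++ (A ++ A.reverse) ++ (w.take ℓ).reverse by simp]
    refine ((hw.take ℓ).append hg'occ (by omega) hb |>.append hAocc ?_ hb).append hright ?_ hb
    · simp only [List.length_append, List.length_take]; omega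
    · simp only [List.length_append, List.length_take, List.length_reverse]; omega

theorem type1_of_SAGPat {T : List Char} {i r : ℕ} (hmax : ∀ r', evenPalAt T i r' → r' ≤ r)
    {w g u : List Char} (hs : SAGPat T i w g u) (hru : r ≤ u.length) : type1 T i :=
  ⟨w, g, u, hs, fun r' hr' => (hmax r' hr').trans hru⟩

/-- every SAGP for pivot i at a type-2 position ends at one of the
positions i+2, ..., i+Pals[i]; i.e. 2 ≤ |w|+|u| ≤ Pals[i]. -/
theorem type2_SAGP_end_position (T : List Char) (i r : ℕ)
    (hpal : evenPalAt T i r) (hmax : ∀ r', evenPalAt T i r' → r' ≤ r)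
    (h2 : ¬ type1 T i)
    (w g u : List Char) (hs : SAGPat T i w g u) :
    i + 2 ≤ i + u.length + w.length ∧ i + u.length + w.length ≤ i + r := by
  have hw := List.length_pos_iff.mpr hs.1
  have hu := List.length_pos_iff.mpr hs.2.2.1
  have hur : u.length < r := lt_of_not_ge fun hru => h2 (type1_of_SAGPat hmax hs hru)
  have hreach : u.length + w.length ≤ r := by
    by_contra! hr
    obtain ⟨w', g', u', hs', hu'⟩ := hs.exists_of_evenPalAt hpal hur.le (by omega)
    exact h2 (type1_of_SAGPat hmax hs' hu'.ge)
  omega
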